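/- Let A be an N×N real matrix with nonnegative entries, β ≥ 0 with β · max_i ∑_j A_{ij} < 1, and fix c ≥ 0. Then there exists a unique subset S* of {0,…,N−1} that is c-stable (i.e. (I − β A[S*])^{-1} 𝟙_{S*} ≥ c 𝟙_{S*} entrywise, vacuously if S* is empty) and contains every c-stable subset: for every S with (I − β A[S])^{-1} 𝟙_S ≥ c 𝟙_S entrywise, S ⊆ S*. -/

import Mathlib

open Matrix

/-- Principal submatrix of `A` indexed by the subset `S`. -/
def psub {N : ℕ} (A : Matrix (Fin N) (Fin N) ℝ) (S : Finset (Fin N)) :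
    Matrix {i // i ∈ S} {i // i ∈ S} ℝ :=
  Matrix.of fun i j => A i.1 j.1

/-- Bonacich centrality vector `(I - β A[S])⁻¹ 𝟙_S` of the induced subnetwork on `S`. -/
noncomputable def bon {N : ℕ} (A : Matrix (Fin N) (Fin N) ℝ) (β : ℝ) (S : Finset (Fin N)) :
    {i // i ∈ S} → ℝ :=
  (1 - β • psub A S)⁻¹ *ᵥ fun _ => 1

/-- A subset `S` is `c`-stable if `(I - β A[S])⁻¹ 𝟙_S ≥ c 𝟙_S` entrywise. -/
def IsStable {N : ℕ} (A : Matrix (Fin N) (Fin N) ℝ) (β c : ℝ) (S : Finset (Fin N)) : Prop :=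
  ∀ i : {i // i ∈ S}, c ≤ bon A β S i

/-! The `c`-stable sets are closed under union, so their union is the maximal one. Closure under
union comes from monotonicity of the centrality `(1 - β A[S])⁻¹ 𝟙` in `S`, which follows from a
minimum principle: for `M ≥ 0` with row sums `< 1`, `(1 - M) z ≥ 0` forces `z ≥ 0`. -/

open Finset

lemma Fintype.sum_comp_le_sum_of_injective {ι κ : Type*} [Fintype ι] [Fintype κ] {e : κ → ι}
    (he : Function.Injective e) {f : ι → ℝ} (hf : ∀ i, 0 ≤ f i) :
    ∑ k, f (e k) ≤ ∑ i, f i :=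
  calc ∑ k, f (e k) = ∑ i ∈ univ.map ⟨e, he⟩, f i := (sum_map univ ⟨e, he⟩ f).symm
    _ ≤ ∑ i, f i := sum_le_univ_sum_of_nonneg hf

section SubstochasticMatrix

variable {ι : Type*} [Fintype ι] [DecidableEq ι] {M : Matrix ι ι ℝ}

omit [DecidableEq ι] in
lemma row_sum_submatrix_le {κ : Type*} [Fintype κ] {e : κ → ι} (he : Function.Injective e)
    (hM : ∀ i j, 0 ≤ M i j) (k : κ) : ∑ l, M.submatrix e e k l ≤ ∑ j, M (e k) j :=
  Fintype.sum_comp_le_sum_of_injective he (hM (e k))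

lemma one_sub_mulVec_apply (z : ι → ℝ) (i : ι) :
    ((1 - M) *ᵥ z) i = z i - ∑ j, M i j * z j := by
  simp only [sub_mulVec, one_mulVec, Pi.sub_apply]
  rfl

/-- Minimum principle: at a minimum `z i₀ < 0` one would get
`z i₀ ≥ ∑ j, M i₀ j * z j ≥ (∑ j, M i₀ j) * z i₀ > z i₀`. -/
lemma nonneg_of_nonneg_one_sub_mulVec (hM : ∀ i j, 0 ≤ M i j) (hrow : ∀ i, ∑ j, M i j < 1)
    {z : ι → ℝ} (hz : 0 ≤ (1 - M) *ᵥ z) : 0 ≤ z := by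
  intro i
  by_contra! hi
  have : Nonempty ι := ⟨i⟩
  obtain ⟨i₀, hmin⟩ := Finite.exists_min z
  have hneg : z i₀ < 0 := (hmin i).trans_lt hi
  have hfix : ∑ j, M i₀ j * z j ≤ z i₀ := by
    simpa [one_sub_mulVec_apply] using hz i₀
  have hbelow : (∑ j, M i₀ j) * z i₀ ≤ ∑ j, M i₀ j * z j := by
    rw [Finset.sum_mul]
    exact sum_le_sum fun j _ => mul_le_mul_of_nonneg_left (hmin j) (hM i₀ j)
  nlinarith [hrow i₀]

lemma isUnit_one_sub_of_row_sum_lt_one (hM : ∀ i j, 0 ≤ M i j) (hrow : ∀ i, ∑ j, M i j < 1) :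
    IsUnit (1 - M) := by
  rw [← mulVec_injective_iff_isUnit]
  intro u w huw
  have hzero : ∀ {a b : ι → ℝ}, (1 - M) *ᵥ a = (1 - M) *ᵥ b → 0 ≤ a - b := fun h =>
    nonneg_of_nonneg_one_sub_mulVec hM hrow (by rw [mulVec_sub, h, sub_self])
  exact le_antisymm (sub_nonneg.1 (hzero huw.symm)) (sub_nonneg.1 (hzero huw))

lemma one_sub_mulVec_inv_mulVec (hM : ∀ i j, 0 ≤ M i j) (hrow : ∀ i, ∑ j, M i j < 1)
    (v : ι → ℝ) : (1 - M) *ᵥ ((1 - M)⁻¹ *ᵥ v) = v := by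
  have hdet := (isUnit_iff_isUnit_det _).1 (isUnit_one_sub_of_row_sum_lt_one hM hrow)
  rw [mulVec_mulVec, mul_nonsing_inv _ hdet, one_mulVec]

lemma inv_one_sub_mulVec_nonneg (hM : ∀ i j, 0 ≤ M i j) (hrow : ∀ i, ∑ j, M i j < 1)
    {v : ι → ℝ} (hv : 0 ≤ v) : 0 ≤ (1 - M)⁻¹ *ᵥ v :=
  nonneg_of_nonneg_one_sub_mulVec hM hrow (by rwa [one_sub_mulVec_inv_mulVec hM hrow])

/-- Restricted to `κ`, `y := (1 - M)⁻¹ 𝟙` satisfies `(1 - M[κ]) y ≥ 𝟙`, since the dropped terms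
`M (e k) j * y j` are nonnegative; the minimum principle then compares it with `(1 - M[κ])⁻¹ 𝟙`. -/
lemma inv_one_sub_submatrix_mulVec_one_le {κ : Type*} [Fintype κ] [DecidableEq κ]
    {e : κ → ι} (he : Function.Injective e)
    (hM : ∀ i j, 0 ≤ M i j) (hrow : ∀ i, ∑ j, M i j < 1) (k : κ) :
    ((1 - M.submatrix e e)⁻¹ *ᵥ fun _ => 1) k ≤ ((1 - M)⁻¹ *ᵥ fun _ => 1) (e k) := by
  set y := (1 - M)⁻¹ *ᵥ fun _ => (1 : ℝ)
  have hMe : ∀ k l, 0 ≤ M.submatrix e e k l := fun _ _ => hM _ _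
  have hrowe : ∀ k, ∑ l, M.submatrix e e k l < 1 :=
    fun k => (row_sum_submatrix_le he hM k).trans_lt (hrow (e k))
  have hy : 0 ≤ y := inv_one_sub_mulVec_nonneg hM hrow fun _ => zero_le_one
  have hsuper : (fun _ => 1) ≤ (1 - M.submatrix e e) *ᵥ (y ∘ e) := by
    intro k
    have hfix := congrFun (one_sub_mulVec_inv_mulVec hM hrow fun _ => (1 : ℝ)) (e k)
    rw [one_sub_mulVec_apply] at hfix ⊢
    simp only [submatrix_apply, Function.comp_apply]
    have := Fintype.sum_comp_le_sum_of_injective he fun j => mul_nonneg (hM (e k) j) (hy j)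
    linarith
  have := nonneg_of_nonneg_one_sub_mulVec hMe hrowe
    (z := y ∘ e - (1 - M.submatrix e e)⁻¹ *ᵥ fun _ => 1)
    (by rwa [mulVec_sub, one_sub_mulVec_inv_mulVec hMe hrowe, sub_nonneg]) k
  exact sub_nonneg.1 this

end SubstochasticMatrix

section Stability

variable {N : ℕ} {A : Matrix (Fin N) (Fin N) ℝ} {β : ℝ}

lemma row_sum_smul_psub_lt_one (hA : ∀ i j, 0 ≤ A i j) (hβ : 0 ≤ β)
    (hrow : ∀ i, β * ∑ j, A i j < 1) (S : Finset (Fin N)) (i : {i // i ∈ S}) :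
    ∑ j, (β • psub A S) i j < 1 := by
  calc ∑ j, (β • psub A S) i j = ∑ j, (β • A).submatrix Subtype.val Subtype.val i j := rfl
    _ ≤ ∑ j, (β • A) i j :=
      row_sum_submatrix_le Subtype.val_injective (fun i j => mul_nonneg hβ (hA i j)) i
    _ = β * ∑ j, A i j := by simp [Finset.mul_sum]
    _ < 1 := hrow i

lemma bon_le_bon_of_subset (hA : ∀ i j, 0 ≤ A i j) (hβ : 0 ≤ β)
    (hrow : ∀ i, β * ∑ j, A i j < 1) {S T : Finset (Fin N)} (hST : S ⊆ T) (i : {i // i ∈ S}) :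
    bon A β S i ≤ bon A β T ⟨i, hST i.2⟩ :=
  inv_one_sub_submatrix_mulVec_one_le (M := β • psub A T)
    (e := fun i : {i // i ∈ S} => ⟨i, hST i.2⟩)
    (fun _ _ h => Subtype.ext (congrArg Subtype.val h :))
    (fun i j => mul_nonneg hβ (hA i j)) (row_sum_smul_psub_lt_one hA hβ hrow T) i

end Stability

theorem exists_unique_maximal_stable_general {N : ℕ} (A : Matrix (Fin N) (Fin N) ℝ) (β : ℝ)
    (hA : ∀ i j, 0 ≤ A i j) (hβ : 0 ≤ β) (hrow : ∀ i, β * ∑ j, A i j < 1)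
    (c : ℝ) :
    ∃! Sstar : Finset (Fin N),
      IsStable A β c Sstar ∧ ∀ S : Finset (Fin N), IsStable A β c S → S ⊆ Sstar := by
  classical
  set Sstar := (univ.filter (IsStable A β c)).sup id
  have hmax : ∀ S, IsStable A β c S → S ⊆ Sstar := fun S hS =>
    le_sup (f := id) (mem_filter.2 ⟨mem_univ S, hS⟩)
  have hstable : IsStable A β c Sstar := by
    rintro ⟨i, hi⟩
    obtain ⟨S, hS, hiS⟩ := mem_sup.1 hi
    have hS : IsStable A β c S := (mem_filter.1 hS).2
    exact (hS ⟨i, hiS⟩).trans (bon_le_bon_of_subset hA hβ hrow (hmax S hS) ⟨i, hiS⟩)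
  exact ⟨Sstar, ⟨hstable, hmax⟩,
    fun T ⟨hT, hTmax⟩ => (hmax T hT).antisymm (hTmax Sstar hstable)⟩

/-- There is a unique `c`-stable subset containing every `c`-stable subset. -/
theorem exists_unique_maximal_stable {N : ℕ} (A : Matrix (Fin N) (Fin N) ℝ) (β : ℝ)
    (hA : ∀ i j, 0 ≤ A i j) (hβ : 0 ≤ β) (hrow : ∀ i, β * ∑ j, A i j < 1)
    (c : ℝ) (hc : 0 ≤ c) :
    ∃! Sstar : Finset (Fin N),
      IsStable A β c Sstar ∧ ∀ S : Finset (Fin N), IsStable A β c S → S ⊆ Sstar :=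
  exists_unique_maximal_stable_general A β hA hβ hrow c
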